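/- Define D(N) = N·D*_N(Y₂) for the binary van der Corput sequence Y₂. Then D(1) = 1, and for all N ∈ ℕ: D(2N) = D(N) and D(2N+1) = (D(N) + D(N+1) + 1)/2. -/

import Mathlib

open scoped Classical
open Filter

/-- The b-adic radical inverse (van der Corput) function. -/
noncomputable def vdc (b n : ℕ) : ℝ :=
  ∑ j ∈ Finset.range (n + 1), ((n / b ^ j % b : ℕ) : ℝ) / (b : ℝ) ^ (j + 1)

/-- The star discrepancy of the first `N` terms of a sequence in `[0,1)`. -/
noncomputable def dstar (x : ℕ → ℝ) (N : ℕ) : ℝ :=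
  ⨆ t : Set.Icc (0 : ℝ) 1,
    |(((Finset.range N).filter (fun n => x n ∈ Set.Ico (0 : ℝ) (t : ℝ))).card : ℝ) / N - (t : ℝ)|

/-- `D(N) := N D*_N(Y₂)`. -/
noncomputable def Dvdc (N : ℕ) : ℝ := (N : ℝ) * dstar (vdc 2) N

/-!
Write `Δ_N(t) = #{n < N : Y₂(n) < t} - N t`. Since `Y₂(2k) = Y₂(k)/2` and
`Y₂(2k+1) = (1 + Y₂(k))/2`, on the two halves `t = s/2` and `t = (s+1)/2` of `[0,1]` one gets
`Δ_{2m}(t) = Δ_m(s)` in both cases, while `Δ_{2m+1}(t)` is `Δ_{m+1}(s) + s/2` resp.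
`Δ_m(s) + (1-s)/2`, the larger of which is `(Δ_m(s) + Δ_{m+1}(s) + 1)/2`. By induction `Δ_N ≥ 0`,
so `D(N) = sup Δ_N`, and `D(2m) = D(m)` follows. For `D(2m+1)` one needs
`sup (Δ_m + Δ_{m+1}) = D(m) + D(m+1)`, i.e. `Δ_m` and `Δ_{m+1}` have common near-maximizers;
this property passes from `m` to `2m` and `2m+1` through the same half-interval maps.
Finally `D(1) = 1` is the odd recursion at `m = 0`.
-/

open Finset

lemma vdc_nonneg (b n : ℕ) : 0 ≤ vdc b n :=
  sum_nonneg fun _ _ => by positivity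

@[simp]
lemma vdc_zero (b : ℕ) : vdc b 0 = 0 := by
  simp [vdc]

lemma vdc_eq_sum_range {b n M : ℕ} (hb : 1 < b) (hn : n < b ^ M) :
    vdc b n = ∑ j ∈ range M, ((n / b ^ j % b : ℕ) : ℝ) / (b : ℝ) ^ (j + 1) := by
  have hvanish : ∀ K, n < b ^ K →
      ∀ j ≥ K, ((n / b ^ j % b : ℕ) : ℝ) / (b : ℝ) ^ (j + 1) = 0 := by
    intro K hK j hj
    rw [Nat.div_eq_of_lt (hK.trans_le (Nat.pow_le_pow_right (by omega) hj))]
    simp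
  have hmin : n < b ^ min M (n + 1) := by
    rcases min_choice M (n + 1) with h | h <;> rw [h]
    · exact hn
    · exact (Nat.lt_pow_self hb).trans (Nat.pow_lt_pow_right hb n.lt_succ_self)
  rw [vdc, eventually_constant_sum (hvanish _ hmin) (min_le_right _ _),
    eventually_constant_sum (hvanish _ hmin) (min_le_left _ _)]

lemma vdc_mul_add {b d : ℕ} (hb : 1 < b) (hd : d < b) (k : ℕ) :
    vdc b (b * k + d) = (d + vdc b k) / b := by
  have hk : k < b ^ (b * k + d) :=
    (Nat.lt_pow_self hb).trans_le (Nat.pow_le_pow_right (by omega) (by nlinarith))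
  have hdigit : ∀ j, (b * k + d) / b ^ (j + 1) = k / b ^ j := by
    intro j
    rw [pow_succ', ← Nat.div_div_eq_div_mul, Nat.mul_add_div (by omega), Nat.div_eq_of_lt hd,
      add_zero]
  rw [vdc, sum_range_succ', vdc_eq_sum_range hb hk]
  simp only [hdigit, pow_zero, Nat.div_one, Nat.mul_add_mod, Nat.mod_eq_of_lt hd]
  rw [add_comm (d : ℝ), add_div, sum_div]
  congr 1
  · exact sum_congr rfl fun j _ => by ring
  · ring

lemma vdc_lt_one {b : ℕ} (hb : 1 < b) (n : ℕ) : vdc b n < 1 := by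
  induction n using Nat.strong_induction_on with
  | _ n ih =>
    rcases n.eq_zero_or_pos with rfl | hn
    · simp
    have hlt := ih (n / b) (Nat.div_lt_self hn hb)
    have hmod : ((n % b : ℕ) : ℝ) + 1 ≤ b := by exact_mod_cast Nat.mod_lt n (by omega)
    rw [← Nat.div_add_mod n b, vdc_mul_add hb (Nat.mod_lt n (by omega)),
      div_lt_one (by positivity)]
    linarith

lemma vdc_two_mul (k : ℕ) : vdc 2 (2 * k) = vdc 2 k / 2 := by
  simpa using vdc_mul_add (b := 2) (d := 0) one_lt_two two_pos k

lemma vdc_two_mul_add_one (k : ℕ) : vdc 2 (2 * k + 1) = (1 + vdc 2 k) / 2 := by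
  simpa using vdc_mul_add (b := 2) (d := 1) one_lt_two one_lt_two k

lemma vdc_two_mul_lt_iff {k : ℕ} {t : ℝ} : vdc 2 (2 * k) < t ↔ vdc 2 k < 2 * t := by
  rw [vdc_two_mul]; constructor <;> intro h <;> linarith

lemma vdc_two_mul_add_one_lt_iff {k : ℕ} {t : ℝ} :
    vdc 2 (2 * k + 1) < t ↔ vdc 2 k < 2 * t - 1 := by
  rw [vdc_two_mul_add_one]; constructor <;> intro h <;> linarith

namespace VanDerCorput

noncomputable def count (N : ℕ) (t : ℝ) : ℕ := #{n ∈ range N | vdc 2 n < t}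

lemma count_succ (N : ℕ) (t : ℝ) :
    count (N + 1) t = count N t + if vdc 2 N < t then 1 else 0 := by
  rw [count, count, card_filter, card_filter, sum_range_succ]

lemma count_le (N : ℕ) (t : ℝ) : count N t ≤ N :=
  (card_filter_le _ _).trans (card_range N).le

lemma count_eq_zero {t : ℝ} (ht : t ≤ 0) (N : ℕ) : count N t = 0 := by
  rw [count, card_eq_zero, filter_eq_empty_iff]
  exact fun n _ => not_lt.2 (ht.trans (vdc_nonneg 2 n))

lemma count_eq_self {t : ℝ} (ht : 1 ≤ t) (N : ℕ) : count N t = N := by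
  rw [count, filter_true_of_mem fun n _ => (vdc_lt_one one_lt_two n).trans_le ht, card_range]

lemma count_two_mul (m : ℕ) (t : ℝ) :
    count (2 * m) t = count m (2 * t) + count m (2 * t - 1) := by
  induction m with
  | zero => simp [count]
  | succ m ih =>
    rw [show 2 * (m + 1) = 2 * m + 1 + 1 by ring, count_succ, count_succ, ih, count_succ,
      count_succ]
    simp only [vdc_two_mul_lt_iff, vdc_two_mul_add_one_lt_iff]
    ring

lemma count_two_mul_add_one (m : ℕ) (t : ℝ) :
    count (2 * m + 1) t = count (m + 1) (2 * t) + count m (2 * t - 1) := by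
  simp only [count_succ, count_two_mul, vdc_two_mul_lt_iff]
  ring

noncomputable def localDisc (N : ℕ) (t : ℝ) : ℝ := count N t - N * t

lemma localDisc_zero (t : ℝ) : localDisc 0 t = 0 := by
  simp [localDisc, count]

lemma localDisc_succ (N : ℕ) (t : ℝ) :
    localDisc (N + 1) t = localDisc N t + (if vdc 2 N < t then 1 else 0) - t := by
  rw [localDisc, localDisc, count_succ]
  push_cast
  ring

lemma localDisc_le (N : ℕ) {t : ℝ} (ht : 0 ≤ t) : localDisc N t ≤ N := by
  have hcount : (count N t : ℝ) ≤ N := by exact_mod_cast count_le N t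
  have hNt : 0 ≤ (N : ℝ) * t := mul_nonneg N.cast_nonneg ht
  rw [localDisc]
  linarith

lemma localDisc_two_mul_of_le_half (m : ℕ) {s : ℝ} (hs : s ≤ 1) :
    localDisc (2 * m) (s / 2) = localDisc m s := by
  rw [localDisc, localDisc, count_two_mul, mul_div_cancel₀ s two_ne_zero,
    count_eq_zero (t := s - 1) (by linarith)]
  push_cast
  ring

lemma localDisc_two_mul_of_half_le (m : ℕ) {s : ℝ} (hs : 0 ≤ s) :
    localDisc (2 * m) ((s + 1) / 2) = localDisc m s := by
  rw [localDisc, localDisc, count_two_mul, mul_div_cancel₀ _ two_ne_zero, add_sub_cancel_right,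
    count_eq_self (by linarith)]
  push_cast
  ring

lemma localDisc_two_mul_add_one_of_le_half (m : ℕ) {s : ℝ} (hs : s ≤ 1) :
    localDisc (2 * m + 1) (s / 2) = localDisc (m + 1) s + s / 2 := by
  rw [localDisc, localDisc, count_two_mul_add_one, mul_div_cancel₀ s two_ne_zero,
    count_eq_zero (t := s - 1) (by linarith)]
  push_cast
  ring

lemma localDisc_two_mul_add_one_of_half_le (m : ℕ) {s : ℝ} (hs : 0 ≤ s) :
    localDisc (2 * m + 1) ((s + 1) / 2) = localDisc m s + (1 - s) / 2 := by
  rw [localDisc, localDisc, count_two_mul_add_one, mul_div_cancel₀ _ two_ne_zero,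
    add_sub_cancel_right, count_eq_self (by linarith)]
  push_cast
  ring

lemma max_localDisc_two_mul_add_one (m : ℕ) {s : ℝ} (hs : s ∈ Set.Icc (0 : ℝ) 1) :
    max (localDisc (2 * m + 1) (s / 2)) (localDisc (2 * m + 1) ((s + 1) / 2)) =
      (localDisc m s + localDisc (m + 1) s + 1) / 2 := by
  rw [localDisc_two_mul_add_one_of_le_half m hs.2, localDisc_two_mul_add_one_of_half_le m hs.1,
    localDisc_succ]
  split_ifs
  · rw [max_eq_left (by linarith)]; ring
  · rw [max_eq_right (by linarith)]; ring

lemma exists_eq_half_or_eq_half_add_one {t : ℝ} (ht : t ∈ Set.Icc (0 : ℝ) 1) :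
    ∃ s ∈ Set.Icc (0 : ℝ) 1, t = s / 2 ∨ t = (s + 1) / 2 := by
  rcases le_or_gt t (1 / 2) with h | h
  · exact ⟨2 * t, ⟨by linarith [ht.1], by linarith⟩, Or.inl (by ring)⟩
  · exact ⟨2 * t - 1, ⟨by linarith, by linarith [ht.2]⟩, Or.inr (by ring)⟩

lemma localDisc_nonneg (N : ℕ) {t : ℝ} (ht : t ∈ Set.Icc (0 : ℝ) 1) :
    0 ≤ localDisc N t := by
  induction N using Nat.strong_induction_on generalizing t with
  | _ N ih =>
    obtain ⟨s, hs, hts⟩ := exists_eq_half_or_eq_half_add_one ht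
    obtain ⟨m, rfl | rfl⟩ := N.even_or_odd'
    · rcases m.eq_zero_or_pos with rfl | hm
      · simp [localDisc_zero]
      rcases hts with rfl | rfl
      · rw [localDisc_two_mul_of_le_half m hs.2]; exact ih m (by omega) hs
      · rw [localDisc_two_mul_of_half_le m hs.1]; exact ih m (by omega) hs
    rcases hts with rfl | rfl
    · rcases m.eq_zero_or_pos with rfl | hm
      · rw [localDisc_succ, localDisc_zero]
        split_ifs with h
        · linarith [hs.2]
        · simp only [mul_zero, vdc_zero, not_lt] at h
          linarith
      · rw [localDisc_two_mul_add_one_of_le_half m hs.2]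
        linarith [ih (m + 1) (by omega) hs, hs.1]
    · rw [localDisc_two_mul_add_one_of_half_le m hs.1]; linarith [ih m (by omega) hs, hs.2]

lemma Dvdc_eq_iSup (N : ℕ) : Dvdc N = ⨆ t : Set.Icc (0 : ℝ) 1, localDisc N t := by
  rw [Dvdc, dstar, Real.mul_iSup_of_nonneg N.cast_nonneg]
  congr 1 with t
  have hcount : #{n ∈ range N | vdc 2 n ∈ Set.Ico (0 : ℝ) t} = count N t :=
    congrArg card (filter_congr fun n _ => by simp [vdc_nonneg])
  rw [hcount, ← abs_of_nonneg (localDisc_nonneg N t.2), localDisc]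
  rcases N.eq_zero_or_pos with rfl | hN
  · simp [count]
  · have hN' : (N : ℝ) ≠ 0 := Nat.cast_ne_zero.2 hN.ne'
    rw [show (count N t : ℝ) - N * t = N * (count N t / N - t) by field_simp, abs_mul,
      Nat.abs_cast]

lemma bddAbove_localDisc (N : ℕ) :
    BddAbove (Set.range fun t : Set.Icc (0 : ℝ) 1 => localDisc N t) :=
  ⟨N, Set.forall_mem_range.2 fun t => localDisc_le N t.2.1⟩

lemma localDisc_le_Dvdc (N : ℕ) {t : ℝ} (ht : t ∈ Set.Icc (0 : ℝ) 1) :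
    localDisc N t ≤ Dvdc N := by
  rw [Dvdc_eq_iSup]
  exact le_ciSup (bddAbove_localDisc N) ⟨t, ht⟩

lemma Dvdc_le {N : ℕ} {c : ℝ} (h : ∀ t ∈ Set.Icc (0 : ℝ) 1, localDisc N t ≤ c) :
    Dvdc N ≤ c := by
  rw [Dvdc_eq_iSup]
  exact ciSup_le fun t => h t t.2

lemma exists_lt_localDisc {N : ℕ} {c : ℝ} (h : c < Dvdc N) :
    ∃ t ∈ Set.Icc (0 : ℝ) 1, c < localDisc N t := by
  rw [Dvdc_eq_iSup] at h
  obtain ⟨t, ht⟩ := exists_lt_of_lt_ciSup h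
  exact ⟨t, t.2, ht⟩

lemma half_mem_Icc {s : ℝ} (hs : s ∈ Set.Icc (0 : ℝ) 1) : s / 2 ∈ Set.Icc (0 : ℝ) 1 :=
  ⟨by linarith [hs.1], by linarith [hs.2]⟩

lemma add_one_half_mem_Icc {s : ℝ} (hs : s ∈ Set.Icc (0 : ℝ) 1) :
    (s + 1) / 2 ∈ Set.Icc (0 : ℝ) 1 :=
  ⟨by linarith [hs.1], by linarith [hs.2]⟩

lemma Dvdc_two_mul (m : ℕ) : Dvdc (2 * m) = Dvdc m := by
  apply le_antisymm
  · refine Dvdc_le fun t ht => ?_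
    obtain ⟨s, hs, rfl | rfl⟩ := exists_eq_half_or_eq_half_add_one ht
    · rw [localDisc_two_mul_of_le_half m hs.2]; exact localDisc_le_Dvdc m hs
    · rw [localDisc_two_mul_of_half_le m hs.1]; exact localDisc_le_Dvdc m hs
  · refine Dvdc_le fun s hs => ?_
    rw [← localDisc_two_mul_of_le_half m hs.2]
    exact localDisc_le_Dvdc _ (half_mem_Icc hs)

lemma Dvdc_two_mul_add_one_le (m : ℕ) :
    Dvdc (2 * m + 1) ≤ (Dvdc m + Dvdc (m + 1) + 1) / 2 := by
  refine Dvdc_le fun t ht => ?_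
  obtain ⟨s, hs, hts⟩ := exists_eq_half_or_eq_half_add_one ht
  have hmax : localDisc (2 * m + 1) t ≤ (localDisc m s + localDisc (m + 1) s + 1) / 2 := by
    rw [← max_localDisc_two_mul_add_one m hs]
    rcases hts with rfl | rfl
    · exact le_max_left _ _
    · exact le_max_right _ _
  linarith [localDisc_le_Dvdc m hs, localDisc_le_Dvdc (m + 1) hs]

lemma exists_localDisc_two_mul_eq (m : ℕ) {s : ℝ} (hs : s ∈ Set.Icc (0 : ℝ) 1) :
    ∃ t ∈ Set.Icc (0 : ℝ) 1, localDisc (2 * m) t = localDisc m s ∧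
      localDisc (2 * m + 1) t = (localDisc m s + localDisc (m + 1) s + 1) / 2 ∧
      localDisc (2 * (m + 1)) t = localDisc (m + 1) s := by
  rcases max_choice (localDisc (2 * m + 1) (s / 2)) (localDisc (2 * m + 1) ((s + 1) / 2))
    with h | h <;> rw [max_localDisc_two_mul_add_one m hs] at h
  · exact ⟨s / 2, half_mem_Icc hs, localDisc_two_mul_of_le_half m hs.2, h.symm,
      localDisc_two_mul_of_le_half (m + 1) hs.2⟩
  · exact ⟨(s + 1) / 2, add_one_half_mem_Icc hs, localDisc_two_mul_of_half_le m hs.1, h.symm,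
      localDisc_two_mul_of_half_le (m + 1) hs.1⟩

def HasCommonNearMaximizers (N : ℕ) : Prop :=
  ∀ ε > 0, ∃ t ∈ Set.Icc (0 : ℝ) 1,
    Dvdc N - ε < localDisc N t ∧ Dvdc (N + 1) - ε < localDisc (N + 1) t

lemma Dvdc_two_mul_add_one {m : ℕ} (hm : HasCommonNearMaximizers m) :
    Dvdc (2 * m + 1) = (Dvdc m + Dvdc (m + 1) + 1) / 2 := by
  refine (Dvdc_two_mul_add_one_le m).antisymm (le_of_forall_pos_lt_add fun ε hε => ?_)
  obtain ⟨s, hs, h₀, h₁⟩ := hm ε hε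
  obtain ⟨t, ht, -, hodd, -⟩ := exists_localDisc_two_mul_eq m hs
  linarith [localDisc_le_Dvdc (2 * m + 1) ht]

lemma hasCommonNearMaximizers (N : ℕ) : HasCommonNearMaximizers N := by
  induction N using Nat.strong_induction_on with
  | _ N ih =>
    intro ε hε
    obtain ⟨m, rfl | rfl⟩ := N.even_or_odd'
    · rcases m.eq_zero_or_pos with rfl | hm
      · obtain ⟨t, ht, h⟩ := exists_lt_localDisc (sub_lt_self (Dvdc 1) hε)
        exact ⟨t, ht, by simpa [Dvdc, localDisc_zero] using hε, by simpa using h⟩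
      obtain ⟨s, hs, h₀, h₁⟩ := ih m (by omega) ε hε
      obtain ⟨t, ht, heven, hodd, -⟩ := exists_localDisc_two_mul_eq m hs
      refine ⟨t, ht, ?_, ?_⟩
      · rwa [heven, Dvdc_two_mul]
      · rw [hodd, Dvdc_two_mul_add_one (ih m (by omega))]; linarith
    · obtain ⟨s, hs, h₀, h₁⟩ := ih m (by omega) ε hε
      obtain ⟨t, ht, -, hodd, heven⟩ := exists_localDisc_two_mul_eq m hs
      refine ⟨t, ht, ?_, ?_⟩
      · rw [hodd, Dvdc_two_mul_add_one (ih m (by omega))]; linarith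
      · rwa [show 2 * m + 1 + 1 = 2 * (m + 1) by ring, heven, Dvdc_two_mul]

end VanDerCorput

/-- The generating recursion for the star discrepancy of the binary van der Corput
sequence: `D(1) = 1`, `D(2N) = D(N)` and `D(2N+1) = (D(N) + D(N+1) + 1) / 2`. -/
theorem vdc_star_discrepancy_recursion :
    Dvdc 1 = 1 ∧
    ∀ N : ℕ, 1 ≤ N →
      Dvdc (2 * N) = Dvdc N ∧
      Dvdc (2 * N + 1) = (Dvdc N + Dvdc (N + 1) + 1) / 2 := by
  have hodd (N : ℕ) : Dvdc (2 * N + 1) = (Dvdc N + Dvdc (N + 1) + 1) / 2 :=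
    VanDerCorput.Dvdc_two_mul_add_one (VanDerCorput.hasCommonNearMaximizers N)
  have hone := hodd 0
  rw [mul_zero, zero_add, show Dvdc 0 = 0 by simp [Dvdc]] at hone
  exact ⟨by linarith, fun N _ => ⟨VanDerCorput.Dvdc_two_mul N, hodd N⟩⟩
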